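/- arXiv:2411.19863 — 2 statements merged into one kernel-verified Lean document; each statement's English description precedes it below -/
import Mathlib

section
/- Let C be a small category in which every morphism factors as a strong epimorphism followed by a monomorphism, let n ∈ ℕ, and let X be a presheaf on C with dim X ≤ n. Then every minimal object (x, D) of the category of elements C/X satisfies 𝔥D ≤ n; consequently every sequence of n+1 composable morphisms in the full subcategory of C/X determined by the minimal objects contains an isomorphism (i.e. IBD_n holds in D X). -/
open CategoryTheory Opposite

universe w v u

namespace PaperEtendue

/-- An element `w` of a Heyting algebra is *widespread* if the lattice of elements
above `w` is complemented. -/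
def Widespread {H : Type u} [HeytingAlgebra H] (w : H) : Prop :=
  ∀ v : H, w ≤ v → ∃ v' : H, w ≤ v' ∧ v ⊔ v' = ⊤ ∧ v ⊓ v' = w

/-- An object is *minimal* if every morphism with that domain is a monomorphism. -/
def Minimal {C : Type u} [Category.{v} C] (c : C) : Prop :=
  ∀ ⦃d : C⦄ (f : c ⟶ d), Mono f

/-- An object is *preterminal* if there is at most one morphism into it from any object. -/
def Preterminal {C : Type u} [Category.{v} C] (c : C) : Prop :=
  ∀ ⦃b : C⦄ (u v : b ⟶ c), u = v

/-- The category of elements `C/X` of a presheaf `X`: objects are pairs `(x, D)`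
with `x ∈ X(D)`. -/
structure Elem {C : Type u} [Category.{v} C] (X : Cᵒᵖ ⥤ Type w) : Type max u w where
  base : C
  elt : X.obj (op base)

/-- Morphisms `(x, D) → (y, E)` in `C/X` are morphisms `f : D → E` of `C` with
`X(f)(y) = x`. -/
instance {C : Type u} [Category.{v} C] (X : Cᵒᵖ ⥤ Type w) : Category (Elem X) where
  Hom a b := {f : a.base ⟶ b.base // X.map f.op b.elt = a.elt}
  id a := ⟨𝟙 a.base, by simp⟩
  comp {a b c} f g := ⟨f.1 ≫ g.1, by
    rw [op_comp, FunctorToTypes.map_comp_apply, g.2, f.2]⟩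
  id_comp f := Subtype.ext (Category.id_comp f.1)
  comp_id f := Subtype.ext (Category.comp_id f.1)
  assoc f g h := Subtype.ext (Category.assoc f.1 g.1 h.1)

/-- A presheaf is *strongly regular* if for every monomorphism of `C/X`
with minimal codomain, the domain is also minimal. -/
def StronglyRegular {C : Type u} [Category.{v} C] (X : Cᵒᵖ ⥤ Type w) : Prop :=
  ∀ ⦃a b : Elem X⦄ (m : a ⟶ b), Mono m → Minimal b → Minimal a

/-- A presheaf is *non-singular* if every minimal object of `C/X` is preterminal. -/
def NonSingular {C : Type u} [Category.{v} C] (X : Cᵒᵖ ⥤ Type w) : Prop :=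
  ∀ a : Elem X, Minimal a → Preterminal a

/-- Every morphism factors as a split epimorphism followed by a monomorphism. -/
def SplitEpiMonoFact (C : Type u) [Category.{v} C] : Prop :=
  ∀ ⦃a b : C⦄ (f : a ⟶ b), ∃ (c : C) (e : a ⟶ c) (m : c ⟶ b),
    IsSplitEpi e ∧ Mono m ∧ e ≫ m = f

/-- Every morphism factors as a strong epimorphism followed by a monomorphism. -/
def StrongEpiMonoFact (C : Type u) [Category.{v} C] : Prop :=
  ∀ ⦃a b : C⦄ (f : a ⟶ b), ∃ (c : C) (e : a ⟶ c) (m : c ⟶ b),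
    StrongEpi e ∧ Mono m ∧ e ≫ m = f

/-- The ascending chain condition: every `ℕ`-indexed chain of monomorphisms lying
over a fixed object via compatible monomorphisms contains an isomorphism. -/
def AscendingChainCondition (C : Type u) [Category.{v} C] : Prop :=
  ∀ (obj : ℕ → C) (c : C) (m : ∀ k : ℕ, obj k ⟶ obj (k + 1)) (i : ∀ k : ℕ, obj k ⟶ c),
    (∀ k, Mono (m k)) → (∀ k, Mono (i k)) → (∀ k, m k ≫ i (k + 1) = i k) →
    ∃ t : ℕ, IsIso (m t)

/-- A category is *well-founded* if every `ℕ`-indexed chain of strong epimorphisms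
is eventually constant. -/
def WellFoundedCat (C : Type u) [Category.{v} C] : Prop :=
  ∀ (obj : ℕ → C) (e : ∀ k : ℕ, obj k ⟶ obj (k + 1)),
    (∀ k, StrongEpi (e k)) → ∃ k : ℕ, ∀ m : ℕ, k ≤ m → IsIso (e m)

/-- `𝔥 c ≤ n`: in every sequence of `n+1` composable monomorphisms ending at `c`,
at least one is an isomorphism. -/
def HeightLE {C : Type u} [Category.{v} C] (c : C) (n : ℕ) : Prop :=
  ∀ (obj : Fin (n + 2) → C) (f : ∀ i : Fin (n + 1), obj i.succ ⟶ obj i.castSucc),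
    (∀ i, Mono (f i)) → obj 0 = c → ∃ i, IsIso (f i)

/-- Every sequence of `n+1` composable morphisms in `C` contains an isomorphism. -/
def ChainsContainIso (C : Type u) [Category.{v} C] (n : ℕ) : Prop :=
  ∀ (obj : Fin (n + 2) → C) (f : ∀ i : Fin (n + 1), obj i.succ ⟶ obj i.castSucc),
    ∃ i, IsIso (f i)

/-- The full subcategory of `C/X` determined by the minimal objects. -/
abbrev MinimalElems {C : Type u} [Category.{v} C] (X : Cᵒᵖ ⥤ Type w) :=
  ObjectProperty.FullSubcategory (fun a : Elem X => Minimal a)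

/-- A morphism factors through an object of height below `n`. -/
def FactorsThroughHeightLE {C : Type u} [Category.{v} C] {a b : C} (f : a ⟶ b) (n : ℕ) : Prop :=
  ∃ (c : C) (v : a ⟶ c) (u : c ⟶ b), HeightLE c n ∧ v ≫ u = f

/-- `dim X ≤ n`: every element of `X` is the restriction of an element along a morphism
factoring through an object of height below `n` (i.e. `X` is `n`-skeletal). -/
def DimLE {C : Type u} [Category.{v} C] (X : Cᵒᵖ ⥤ Type w) (n : ℕ) : Prop :=
  ∀ (D : C) (x : X.obj (op D)), ∃ (E : C) (f : D ⟶ E) (y : X.obj (op E)),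
    FactorsThroughHeightLE f n ∧ X.map f.op y = x

/-- A two-sided ideal of morphisms of a category. -/
def IsIdeal {C : Type u} [Category.{v} C] (I : MorphismProperty C) : Prop :=
  ∀ ⦃a b c d : C⦄ (h : a ⟶ b) (f : b ⟶ c) (g : c ⟶ d), I f → I (h ≫ f ≫ g)

/-- An idempotent ideal: every member factors as a composite of two members. -/
def IsIdempotentIdeal {C : Type u} [Category.{v} C] (I : MorphismProperty C) : Prop :=
  IsIdeal I ∧ ∀ ⦃a b : C⦄ (f : a ⟶ b), I f →
    ∃ (c : C) (h : a ⟶ c) (g : c ⟶ b), I h ∧ I g ∧ h ≫ g = f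

/-- The implication sieve `V ⇒ W`. -/
def sieveImp {C : Type u} [Category.{v} C] {D : C} (V W : Sieve D) : Sieve D where
  arrows F h := ∀ ⦃G : C⦄ (g : G ⟶ F), V.arrows (g ≫ h) → W.arrows (g ≫ h)
  downward_closed := by
    intro F F' h hh g G' g' hv
    have := hh (g' ≫ g) (by simpa using hv)
    simpa using this

/-- `W` is a subpresheaf of `X` given as a family of subsets closed under the action. -/
def IsSubpresheaf {C : Type u} [Category.{v} C] (X : Cᵒᵖ ⥤ Type w)
    (W : ∀ D : Cᵒᵖ, Set (X.obj D)) : Prop :=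
  ∀ ⦃D E : Cᵒᵖ⦄ (f : D ⟶ E) ⦃x : X.obj D⦄, x ∈ W D → X.map f x ∈ W E

/-- The implication subpresheaf `(V ⇒ W)(D)`. -/
def impSet {C : Type u} [Category.{v} C] (X : Cᵒᵖ ⥤ Type w)
    (V W : ∀ D : Cᵒᵖ, Set (X.obj D)) (D : Cᵒᵖ) : Set (X.obj D) :=
  {x | ∀ ⦃E : Cᵒᵖ⦄ (f : D ⟶ E), X.map f x ∈ V E → X.map f x ∈ W E}

/-- `Ξ_k`: the image subpresheaf of the map `C(-, K) → X` corresponding to `k`. -/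
def xiSet {C : Type u} [Category.{v} C] (X : Cᵒᵖ ⥤ Type w) {K : C} (k : X.obj (op K))
    (J : Cᵒᵖ) : Set (X.obj J) :=
  {j | ∃ g : op K ⟶ J, X.map g k = j}

/-! If `(x, D)` is minimal and `x` is restricted from an element along `D ⟶ c ⟶ E` with
`𝔥 c ≤ n`, then `D ⟶ c` underlies a morphism of `C/X` out of `(x, D)`, hence is a
monomorphism, and height descends along monomorphisms. A chain of minimal elements lies over a
chain of monomorphisms of `C` ending at a minimal base, so one of them is an isomorphism, and
`C/X` detects isomorphisms in `C`. -/

lemma isIso_of_isIso_comp_of_mono {C : Type u} [Category.{v} C] {a b c : C}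
    (f : a ⟶ b) (m : b ⟶ c) [Mono m] [IsIso (f ≫ m)] : IsIso f := by
  have : IsSplitEpi m := IsSplitEpi.mk' ⟨inv (f ≫ m) ≫ f, by simp⟩
  have := isIso_of_mono_of_isSplitEpi m
  exact IsIso.of_isIso_comp_right f m

lemma HeightLE.of_mono {C : Type u} [Category.{v} C] {n : ℕ} {a b : C} (m : a ⟶ b) [Mono m]
    (hb : HeightLE b n) : HeightLE a n := by
  intro obj f hf h0
  subst h0
  -- the same chain, with its last arrow `f 0` extended by `m` so that it ends at `b`
  let obj' : Fin (n + 2) → C := Fin.cons b (Fin.tail obj)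
  let f' : ∀ i : Fin (n + 1), obj' i.succ ⟶ obj' i.castSucc :=
    Fin.cases (motive := fun i => obj' i.succ ⟶ obj' i.castSucc) (f 0 ≫ m) (fun j => f j.succ)
  -- `f 0` ends at `obj (Fin.castSucc 0)`, only defeq to `obj 0`: instances on `m` go by hand.
  have hf' : ∀ i, Mono (f' i) :=
    Fin.cases (@mono_comp _ _ _ _ _ (f 0) (hf 0) m ‹_›) (fun j => hf j.succ)
  obtain ⟨i, hi⟩ := hb obj' f' hf' rfl
  induction i using Fin.cases with
  | zero => exact ⟨0, @isIso_of_isIso_comp_of_mono _ _ _ _ _ (f 0) m ‹_› hi⟩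
  | succ j => exact ⟨j.succ, hi⟩

namespace Elem

variable {C : Type u} [Category.{v} C] {X : Cᵒᵖ ⥤ Type w}

lemma mono_val {a b : Elem X} (φ : a ⟶ b) [Mono φ] : Mono φ.1 where
  right_cancellation {B} g h hgh := by
    have restrict : ∀ k : B ⟶ a.base, X.map k.op a.elt = X.map (k ≫ φ.1).op b.elt :=
      fun k => by rw [op_comp, Functor.map_comp_apply, φ.2]
    let g' : (⟨B, X.map g.op a.elt⟩ : Elem X) ⟶ a := ⟨g, rfl⟩
    let h' : (⟨B, X.map g.op a.elt⟩ : Elem X) ⟶ a :=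
      ⟨h, show X.map h.op a.elt = X.map g.op a.elt by rw [restrict, restrict g, hgh]⟩
    exact congrArg Subtype.val ((cancel_mono φ).mp (Subtype.ext hgh : g' ≫ φ = h' ≫ φ))

lemma isIso_of_isIso_val {a b : Elem X} (φ : a ⟶ b) [IsIso φ.1] : IsIso φ := by
  have hinv : X.map (inv φ.1).op a.elt = b.elt := by
    rw [← congrArg (X.map (inv φ.1).op) φ.2, ← Functor.map_comp_apply, ← op_comp,
      IsIso.inv_hom_id, op_id, Functor.map_id_apply]
  exact ⟨⟨inv φ.1, hinv⟩, Subtype.ext (IsIso.hom_inv_id φ.1),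
    Subtype.ext (IsIso.inv_hom_id φ.1)⟩

end Elem

lemma Minimal.heightLE {C : Type u} [Category.{v} C] {X : Cᵒᵖ ⥤ Type w} {n : ℕ}
    (hdim : DimLE X n) {a : Elem X} (ha : Minimal a) : HeightLE a.base n := by
  obtain ⟨E, _, y, ⟨c, v, u, hc, rfl⟩, hy⟩ := hdim a.base a.elt
  let v' : a ⟶ ⟨c, X.map u.op y⟩ := ⟨v, by rw [← hy, op_comp, Functor.map_comp_apply]⟩
  have := ha v'
  have : Mono v := Elem.mono_val v'
  exact hc.of_mono v

lemma chainsContainIso_minimalElems {C : Type u} [Category.{v} C] {X : Cᵒᵖ ⥤ Type w} {n : ℕ}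
    (hdim : DimLE X n) : ChainsContainIso (MinimalElems X) n := by
  intro obj f
  have hmono : ∀ i, Mono (f i).hom.1 := fun i =>
    have := (obj i.succ).property (f i).hom
    Elem.mono_val (f i).hom
  obtain ⟨i, hi⟩ := (obj 0).property.heightLE hdim (fun i => (obj i).obj.base)
    (fun i => (f i).hom.1) hmono rfl
  exact ⟨i, (ObjectProperty.isIso_hom_iff _).mp (Elem.isIso_of_isIso_val (f i).hom)⟩

theorem dim_le_implies_ibd_general {C : Type u} [Category.{v} C]
    (n : ℕ) (X : Cᵒᵖ ⥤ Type w) (hdim : DimLE X n) :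
    (∀ a : Elem X, Minimal a → HeightLE a.base n) ∧
      ChainsContainIso (MinimalElems X) n :=
  ⟨fun _ ha => ha.heightLE hdim, chainsContainIso_minimalElems hdim⟩

theorem dim_le_implies_ibd {C : Type u} [Category.{v} C]
    (hfact : StrongEpiMonoFact C) (n : ℕ) (X : Cᵒᵖ ⥤ Type w) (hdim : DimLE X n) :
    (∀ a : Elem X, Minimal a → HeightLE a.base n) ∧
      ChainsContainIso (MinimalElems X) n :=
  dim_le_implies_ibd_general n X hdim

end PaperEtendue
end

section
/- Let C be a small well-founded category in which every morphism factors as a strong epimorphism followed by a monomorphism, let n ∈ ℕ, and let X be a strongly regular presheaf on C. If every sequence of n+1 composable morphisms in the full subcategory of the category of elements C/X determined by the minimal objects contains an isomorphism (i.e. IBD_n holds in D X), then dim X ≤ n. -/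
open CategoryTheory Opposite

universe w v u

namespace PaperEtendue

/-! Since `C` is well-founded and has (strong epi, mono) factorizations, every
element of `C/X` maps to a minimal one: a non-minimal element has a morphism that is not mono,
and its strong-epi part is a proper quotient, which can only be taken finitely often. So
`x = X(f)(y)` with `(y, E)` minimal. Restricting `y` along a chain of monomorphisms ending at `E`
gives a chain of monomorphisms in `C/X` ending at `(y, E)`, all of whose objects are minimal by
strong regularity; `IBD_n` yields an isomorphism in it, so `𝔥 E ≤ n`. -/

def IsProperStrongQuotient {C : Type u} [Category.{v} C] (b a : C) : Prop :=
  ∃ e : a ⟶ b, StrongEpi e ∧ ¬ IsIso e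

theorem WellFoundedCat.wellFounded {C : Type u} [Category.{v} C] (hwf : WellFoundedCat C) :
    WellFounded (IsProperStrongQuotient (C := C)) := by
  refine wellFounded_iff_isEmpty_descending_chain.2 ⟨fun ⟨obj, hobj⟩ => ?_⟩
  choose e he hne using hobj
  obtain ⟨k, hk⟩ := hwf obj e he
  exact hne k (hk k le_rfl)

namespace Elem

variable {C : Type u} [Category.{v} C] {X : Cᵒᵖ ⥤ Type w}

variable (X) in
def forget : Elem X ⥤ C where
  obj a := a.base
  map f := f.1

instance : (forget X).Faithful where
  map_injective h := Subtype.ext h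

theorem exists_strongEpi_not_isIso_of_not_minimal (hfact : StrongEpiMonoFact C) {a : Elem X}
    (ha : ¬ Minimal a) : ∃ (b : Elem X) (e : a ⟶ b), StrongEpi e.1 ∧ ¬ IsIso e.1 := by
  simp only [Minimal, not_forall] at ha
  obtain ⟨d, h, hh⟩ := ha
  obtain ⟨c, e, m, he, hm, hem⟩ := hfact h.1
  have hec : X.map e.op (X.map m.op d.elt) = a.elt := by
    rw [← Functor.map_comp_apply, ← op_comp, hem, h.2]
  refine ⟨⟨c, X.map m.op d.elt⟩, ⟨e, hec⟩, he, fun _ => hh ?_⟩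
  have : Mono h.1 := hem ▸ mono_comp e m
  exact (forget X).mono_of_mono_map this

theorem exists_hom_minimal (hwf : WellFoundedCat C) (hfact : StrongEpiMonoFact C)
    (a : Elem X) : ∃ (b : Elem X) (_ : a ⟶ b), Minimal b := by
  induction a using (InvImage.wf base hwf.wellFounded).induction with
  | _ a ih =>
    by_cases ha : Minimal a
    · exact ⟨a, 𝟙 a, ha⟩
    obtain ⟨b, e, he, hne⟩ := exists_strongEpi_not_isIso_of_not_minimal hfact ha
    obtain ⟨c, g, hc⟩ := ih b ⟨e.1, he, hne⟩
    exact ⟨c, e ≫ g, hc⟩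

section Chain

variable {m : ℕ} (obj : Fin (m + 1) → C) (f : ∀ i : Fin m, obj i.succ ⟶ obj i.castSucc)
  (y : X.obj (op (obj 0)))

def restrictAlong (i : Fin (m + 1)) : Elem X :=
  ⟨obj i, Fin.induction y (fun i z => X.map (f i).op z) i⟩

def restrictAlongHom (i : Fin m) :
    restrictAlong obj f y i.succ ⟶ restrictAlong obj f y i.castSucc :=
  ⟨f i, (Fin.induction_succ _ _ i).symm⟩

theorem minimal_restrictAlong (hreg : StronglyRegular X) (hf : ∀ i, Mono (f i))
    (hy : Minimal (⟨obj 0, y⟩ : Elem X)) (i : Fin (m + 1)) :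
    Minimal (restrictAlong obj f y i) := by
  induction i using Fin.induction with
  | zero => exact hy
  | succ i ih =>
    exact hreg (restrictAlongHom obj f y i) ((forget X).mono_of_mono_map (hf i)) ih

end Chain

theorem heightLE_base_of_minimal {n : ℕ} (hreg : StronglyRegular X)
    (hibd : ChainsContainIso (MinimalElems X) n) {b : Elem X} (hb : Minimal b) :
    HeightLE b.base n := by
  obtain ⟨E, y⟩ := b
  rintro obj f hf rfl
  let A (i : Fin (n + 2)) : MinimalElems X := ⟨_, minimal_restrictAlong obj f y hreg hf hb i⟩
  obtain ⟨i, hi⟩ := hibd A (fun i => ObjectProperty.homMk (restrictAlongHom obj f y i))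
  exact ⟨i, (ObjectProperty.ι _ ⋙ forget X).map_isIso
    (ObjectProperty.homMk (X := A i.succ) (Y := A i.castSucc) (restrictAlongHom obj f y i))⟩

end Elem

theorem ibd_implies_dim_le {C : Type u} [Category.{v} C]
    (hwf : WellFoundedCat C) (hfact : StrongEpiMonoFact C)
    (n : ℕ) (X : Cᵒᵖ ⥤ Type w) (hreg : StronglyRegular X)
    (hibd : ChainsContainIso (MinimalElems X) n) : DimLE X n := by
  intro D x
  obtain ⟨⟨E, y⟩, f, hmin⟩ := Elem.exists_hom_minimal hwf hfact ⟨D, x⟩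
  exact ⟨E, f.1, y, ⟨E, f.1, 𝟙 E, Elem.heightLE_base_of_minimal hreg hibd hmin,
    Category.comp_id _⟩, f.2⟩

end PaperEtendue
end
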